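/- arXiv:2603.02659 — 4 statements merged into one kernel-verified Lean document; each statement's English description precedes it below -/
import Mathlib

section
/- If an ensemble of unitaries is given by a closed subgroup G of U(d) with some probability weighting w, and the weighted ensemble forms a weighted unitary t-design (i.e., its t-fold twirl channel equals the Haar t-fold twirl channel), then G itself is an unweighted unitary t-design (the uniform/Haar twirl over G equals the Haar twirl over U(d)). -/
open MeasureTheory Matrix

/-- `t`-fold tensor power of a `d × d` matrix, as a matrix indexed by `Fin t → Fin d`. -/
noncomputable def tpow (t : ℕ) {d : ℕ} (U : Matrix (Fin d) (Fin d) ℂ) :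
    Matrix (Fin t → Fin d) (Fin t → Fin d) ℂ :=
  Matrix.of fun x y => ∏ i, U (x i) (y i)

/-- The `t`-fold twirl `U^{†⊗t} X U^{⊗t}` of an operator `X` on `(ℂ^d)^{⊗t}`. -/
noncomputable def twirl (t : ℕ) {d : ℕ} (U : Matrix (Fin d) (Fin d) ℂ)
    (X : Matrix (Fin t → Fin d) (Fin t → Fin d) ℂ) :
    Matrix (Fin t → Fin d) (Fin t → Fin d) ℂ :=
  (tpow t U)ᴴ * X * tpow t U

/-! Write `Φ_m X` for the `m`-average of the twirl `U^{†⊗t} X U^{⊗t}` and `T_U` for the twirl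
by `U`. Left invariance of `ν` gives `Φ_ν ∘ T_h = Φ_ν` for `h ∈ G`; since `U(d)` is compact, the
left-invariant probability measure `μ` is also right invariant, so `T_g ∘ Φ_μ = Φ_μ`. Applying the
linear, hence continuous, map `Φ_ν` to the design identity `∑ w_h T_h X = Φ_μ X` gives
`Φ_ν X = ∑ w_h Φ_ν X = Φ_ν (Φ_μ X) = Φ_μ X`. -/

theorem Matrix.isCompact_unitaryGroup {n 𝕜 : Type*} [Fintype n] [DecidableEq n] [RCLike 𝕜] :
    IsCompact (unitaryGroup n 𝕜 : Set (Matrix n n 𝕜)) := by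
  have hclosed : IsClosed (unitaryGroup n 𝕜 : Set (Matrix n n 𝕜)) := isClosed_unitary
  let _ := Matrix.normedAddCommGroup (n := n) (m := n) (α := 𝕜)
  let _ := Matrix.normedSpace (n := n) (m := n) (R := 𝕜) (α := 𝕜)
  have : ProperSpace (Matrix n n 𝕜) := FiniteDimensional.proper_rclike 𝕜 _
  exact Metric.isCompact_of_isClosed_isBounded hclosed
    (isBounded_iff_forall_norm_le.2 ⟨1, fun _ hU => entrywise_sup_norm_bound_of_unitary hU⟩)

instance Matrix.compactSpace_unitaryGroup {n 𝕜 : Type*} [Fintype n] [DecidableEq n] [RCLike 𝕜] :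
    CompactSpace (unitaryGroup n 𝕜) :=
  isCompact_iff_compactSpace.mp isCompact_unitaryGroup

theorem MeasureTheory.Measure.isMulRightInvariant_of_compactSpace {K : Type*} [Group K]
    [TopologicalSpace K] [IsTopologicalGroup K] [CompactSpace K] [MeasurableSpace K]
    [BorelSpace K] (μ : Measure K) [IsProbabilityMeasure μ] [μ.IsMulLeftInvariant] :
    μ.IsMulRightInvariant := by
  have : μ.IsHaarMeasure :=
    isHaarMeasure_of_isCompact_nonempty_interior μ Set.univ isCompact_univ (by simp) (by simp)
      (by simp)
  refine ⟨fun g => ?_⟩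
  have : IsProbabilityMeasure (μ.map (· * g)) := isProbabilityMeasure_map (by fun_prop)
  exact isHaarMeasure_eq_of_isProbabilityMeasure _ _

theorem HasSum.integral_linearMap {ι Z 𝕜 E F : Type*} [NontriviallyNormedField 𝕜]
    [CompleteSpace 𝕜] [AddCommGroup E] [Module 𝕜 E] [TopologicalSpace E]
    [IsTopologicalAddGroup E] [ContinuousSMul 𝕜 E] [T2Space E] [FiniteDimensional 𝕜 E]
    [NormedAddCommGroup F] [NormedSpace ℝ F] [NormedSpace 𝕜 F] [SMulCommClass ℝ 𝕜 F]
    [MeasurableSpace Z] {μ : Measure Z} {L : Z → E →ₗ[𝕜] F}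
    (hL : ∀ e, Integrable (fun z => L z e) μ) {f : ι → E} {e : E} (hf : HasSum f e) :
    HasSum (fun i => ∫ z, L z (f i) ∂μ) (∫ z, L z e ∂μ) := by
  let Φ : E →ₗ[𝕜] F :=
    { toFun e := ∫ z, L z e ∂μ
      map_add' a b := by simp only [map_add]; exact integral_add (hL a) (hL b)
      map_smul' c a := by simp only [map_smul]; exact integral_smul c _ }
  exact hf.map Φ (LinearMap.continuous_of_finiteDimensional Φ)

theorem LinearMap.map_matrix_of_integral {Z m n 𝕜 F : Type*} [RCLike 𝕜] [Fintype m] [Fintype n]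
    [DecidableEq m] [DecidableEq n] [NormedAddCommGroup F] [NormedSpace 𝕜 F] [NormedSpace ℝ F]
    [CompleteSpace F] [MeasurableSpace Z] {μ : Measure Z} (ℓ : Matrix m n 𝕜 →ₗ[𝕜] F)
    {f : Z → Matrix m n 𝕜} (hf : ∀ i j, Integrable (fun z => f z i j) μ) :
    ℓ (Matrix.of fun i j => ∫ z, f z i j ∂μ) = ∫ z, ℓ (f z) ∂μ := by
  have hℓ (M : Matrix m n 𝕜) : ℓ M = ∑ i, ∑ j, M i j • ℓ (Matrix.single i j 1) := by
    conv_lhs => rw [M.matrix_eq_sum_single]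
    simp only [map_sum, ← map_smul, Matrix.smul_single, smul_eq_mul, mul_one]
  rw [hℓ, funext fun z => hℓ (f z)]
  simp only [Matrix.of_apply]
  rw [integral_finsetSum _ fun i _ => integrable_finsetSum _ fun j _ =>
    (hf i j).smul_const _]
  refine Finset.sum_congr rfl fun i _ => ?_
  rw [integral_finsetSum _ fun j _ => (hf i j).smul_const _]
  exact Finset.sum_congr rfl fun j _ => (integral_smul_const _ _).symm

section Twirl

variable {t d : ℕ}

theorem tpow_mul (t : ℕ) (A B : Matrix (Fin d) (Fin d) ℂ) :
    tpow t (A * B) = tpow t A * tpow t B := by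
  ext x y
  simp only [tpow, Matrix.of_apply, Matrix.mul_apply, Finset.prod_univ_sum,
    Fintype.piFinset_univ, Finset.prod_mul_distrib]

theorem twirl_twirl (t : ℕ) (A B : Matrix (Fin d) (Fin d) ℂ)
    (X : Matrix (Fin t → Fin d) (Fin t → Fin d) ℂ) :
    twirl t B (twirl t A X) = twirl t (A * B) X := by
  simp only [twirl, tpow_mul, Matrix.conjTranspose_mul, Matrix.mul_assoc]

noncomputable def twirlLinearMap (t : ℕ) (U : Matrix (Fin d) (Fin d) ℂ) :
    Matrix (Fin t → Fin d) (Fin t → Fin d) ℂ →ₗ[ℂ] Matrix (Fin t → Fin d) (Fin t → Fin d) ℂ where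
  toFun := twirl t U
  map_add' X Y := by simp only [twirl, Matrix.mul_add, Matrix.add_mul]
  map_smul' c X := by simp [twirl]

@[simp]
theorem twirlLinearMap_apply (U : Matrix (Fin d) (Fin d) ℂ)
    (X : Matrix (Fin t → Fin d) (Fin t → Fin d) ℂ) : twirlLinearMap t U X = twirl t U X :=
  rfl

theorem twirl_twirl_map {K : Type*} [Group K] (ρ : K →* unitaryGroup (Fin d) ℂ) (g k : K)
    (X : Matrix (Fin t → Fin d) (Fin t → Fin d) ℂ) :
    twirl t (ρ g : Matrix (Fin d) (Fin d) ℂ) (twirl t (ρ k : Matrix (Fin d) (Fin d) ℂ) X) =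
      twirl t (ρ (k * g) : Matrix (Fin d) (Fin d) ℂ) X := by
  rw [twirl_twirl, map_mul, Submonoid.coe_mul]

theorem continuous_twirl (t : ℕ) (X : Matrix (Fin t → Fin d) (Fin t → Fin d) ℂ) :
    Continuous fun U : Matrix (Fin d) (Fin d) ℂ => twirl t U X := by
  have htpow : Continuous fun U : Matrix (Fin d) (Fin d) ℂ => tpow t U :=
    continuous_matrix fun x y => by simp only [tpow, Matrix.of_apply]; fun_prop
  exact (htpow.matrix_conjTranspose.matrix_mul continuous_const).matrix_mul htpow

theorem exists_norm_twirl_apply_le (t : ℕ) (X : Matrix (Fin t → Fin d) (Fin t → Fin d) ℂ)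
    (a b : Fin t → Fin d) : ∃ C, ∀ U ∈ unitaryGroup (Fin d) ℂ, ‖twirl t U X a b‖ ≤ C :=
  isCompact_unitaryGroup.exists_bound_of_continuousOn
    ((continuous_twirl t X).matrix_elem a b).continuousOn

theorem integrable_twirl_apply {Z : Type*} [TopologicalSpace Z] [MeasurableSpace Z]
    [OpensMeasurableSpace Z] (μ : Measure Z) [IsFiniteMeasure μ]
    {u : Z → unitaryGroup (Fin d) ℂ} (hu : Continuous u)
    (X : Matrix (Fin t → Fin d) (Fin t → Fin d) ℂ) (a b : Fin t → Fin d) :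
    Integrable (fun z => twirl t (u z : Matrix (Fin d) (Fin d) ℂ) X a b) μ := by
  obtain ⟨C, hC⟩ := exists_norm_twirl_apply_le t X a b
  have hcont : Continuous fun z => twirl t (u z : Matrix (Fin d) (Fin d) ℂ) X a b :=
    ((continuous_twirl t X).matrix_elem a b).comp (continuous_subtype_val.comp hu)
  exact Integrable.of_bound hcont.aestronglyMeasurable C (ae_of_all _ fun z => hC _ (u z).2)

theorem summable_ofReal_mul_twirl_apply {ι : Type*} {w : ι → ℝ} (hw : Summable w)
    (u : ι → unitaryGroup (Fin d) ℂ) (X : Matrix (Fin t → Fin d) (Fin t → Fin d) ℂ)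
    (a b : Fin t → Fin d) :
    Summable fun i => (w i : ℂ) * twirl t (u i : Matrix (Fin d) (Fin d) ℂ) X a b := by
  obtain ⟨C, hC⟩ := exists_norm_twirl_apply_le t X a b
  refine .of_norm_bounded ((summable_abs_iff.2 hw).mul_right C) fun i => ?_
  rw [norm_mul, Complex.norm_real, Real.norm_eq_abs]
  exact mul_le_mul_of_nonneg_left (hC _ (u i).2) (abs_nonneg _)

end Twirl

section TwirlAverage

variable {t d : ℕ} {K : Type*} [Group K] [MeasurableSpace K]

-- Averaged entrywise, since `Matrix` carries no global normed-space instance.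
noncomputable def twirlAverage (t : ℕ) (μ : Measure K) (ρ : K →* unitaryGroup (Fin d) ℂ)
    (X : Matrix (Fin t → Fin d) (Fin t → Fin d) ℂ) : Matrix (Fin t → Fin d) (Fin t → Fin d) ℂ :=
  Matrix.of fun a b => ∫ k, twirl t (ρ k : Matrix (Fin d) (Fin d) ℂ) X a b ∂μ

theorem twirlAverage_smul (μ : Measure K) (ρ : K →* unitaryGroup (Fin d) ℂ) (c : ℂ)
    (X : Matrix (Fin t → Fin d) (Fin t → Fin d) ℂ) :
    twirlAverage t μ ρ (c • X) = c • twirlAverage t μ ρ X := by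
  ext a b
  simp only [twirlAverage, ← twirlLinearMap_apply, map_smul, Matrix.smul_apply, smul_eq_mul,
    Matrix.of_apply, integral_const_mul]

theorem twirlAverage_twirl [MeasurableMul K] (μ : Measure K) [μ.IsMulLeftInvariant]
    (ρ : K →* unitaryGroup (Fin d) ℂ) (k : K) (X : Matrix (Fin t → Fin d) (Fin t → Fin d) ℂ) :
    twirlAverage t μ ρ (twirl t (ρ k : Matrix (Fin d) (Fin d) ℂ) X) = twirlAverage t μ ρ X := by
  ext a b
  simp only [twirlAverage, Matrix.of_apply, twirl_twirl_map]
  exact integral_mul_left_eq_self (fun g => twirl t (ρ g : Matrix (Fin d) (Fin d) ℂ) X a b) k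

theorem twirlAverage_of_forall_twirl_eq (μ : Measure K) [IsProbabilityMeasure μ]
    (ρ : K →* unitaryGroup (Fin d) ℂ) {X : Matrix (Fin t → Fin d) (Fin t → Fin d) ℂ}
    (hX : ∀ k, twirl t (ρ k : Matrix (Fin d) (Fin d) ℂ) X = X) : twirlAverage t μ ρ X = X := by
  ext a b
  simp [twirlAverage, hX]

variable [TopologicalSpace K] [OpensMeasurableSpace K]

theorem twirl_twirlAverage [MeasurableMul K] (μ : Measure K) [IsFiniteMeasure μ]
    [μ.IsMulRightInvariant] {ρ : K →* unitaryGroup (Fin d) ℂ} (hρ : Continuous ρ) (k : K)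
    (X : Matrix (Fin t → Fin d) (Fin t → Fin d) ℂ) :
    twirl t (ρ k : Matrix (Fin d) (Fin d) ℂ) (twirlAverage t μ ρ X) = twirlAverage t μ ρ X := by
  ext a b
  let ℓ := (entryLinearMap ℂ ℂ a b).comp (twirlLinearMap t (ρ k : Matrix (Fin d) (Fin d) ℂ))
  calc ℓ (twirlAverage t μ ρ X)
      = ∫ g, twirl t (ρ (g * k) : Matrix (Fin d) (Fin d) ℂ) X a b ∂μ := by
        rw [twirlAverage, ℓ.map_matrix_of_integral (integrable_twirl_apply μ hρ X)]
        simp [ℓ, twirl_twirl_map]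
    _ = twirlAverage t μ ρ X a b :=
        integral_mul_right_eq_self (fun g => twirl t (ρ g : Matrix (Fin d) (Fin d) ℂ) X a b) k

theorem HasSum.twirlAverage {ι : Type*} {f : ι → Matrix (Fin t → Fin d) (Fin t → Fin d) ℂ}
    {X : Matrix (Fin t → Fin d) (Fin t → Fin d) ℂ} (hf : HasSum f X) (μ : Measure K)
    [IsFiniteMeasure μ] {ρ : K →* unitaryGroup (Fin d) ℂ} (hρ : Continuous ρ) :
    HasSum (fun i => twirlAverage t μ ρ (f i)) (twirlAverage t μ ρ X) :=
  Pi.hasSum.2 fun a => Pi.hasSum.2 fun b =>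
    hf.integral_linearMap (L := fun k =>
      (entryLinearMap ℂ ℂ a b).comp (twirlLinearMap t (ρ k : Matrix (Fin d) (Fin d) ℂ)))
      (integrable_twirl_apply μ hρ · a b)

end TwirlAverage

theorem stmt_1_general (d t : ℕ)
    [MeasurableSpace (Matrix.unitaryGroup (Fin d) ℂ)]
    [BorelSpace (Matrix.unitaryGroup (Fin d) ℂ)]
    (μ : Measure (Matrix.unitaryGroup (Fin d) ℂ)) [IsProbabilityMeasure μ]
    (hμ : ∀ V : Matrix.unitaryGroup (Fin d) ℂ,
      Measure.map (fun U => V * U) μ = μ)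
    (G : Subgroup (Matrix.unitaryGroup (Fin d) ℂ))
    (ν : Measure G) [IsProbabilityMeasure ν]
    (hν : ∀ h : G, Measure.map (fun g => h * g) ν = ν)
    (w : G → ℝ) (hw1 : HasSum w 1)
    (hdesign : ∀ (X : Matrix (Fin t → Fin d) (Fin t → Fin d) ℂ)
      (x y : Fin t → Fin d),
      (∑' g : G, (w g : ℂ) *
        (twirl t (((g : Matrix.unitaryGroup (Fin d) ℂ) : Matrix (Fin d) (Fin d) ℂ)) X) x y)
        = ∫ U, (twirl t ((U : Matrix (Fin d) (Fin d) ℂ)) X) x y ∂μ) :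
    ∀ (X : Matrix (Fin t → Fin d) (Fin t → Fin d) ℂ) (x y : Fin t → Fin d),
      (∫ g : G, (twirl t (((g : Matrix.unitaryGroup (Fin d) ℂ) : Matrix (Fin d) (Fin d) ℂ)) X) x y ∂ν)
        = ∫ U, (twirl t ((U : Matrix (Fin d) (Fin d) ℂ)) X) x y ∂μ := by
  intro X x y
  have : μ.IsMulLeftInvariant := ⟨hμ⟩
  have : μ.IsMulRightInvariant := μ.isMulRightInvariant_of_compactSpace
  have : ν.IsMulLeftInvariant := ⟨hν⟩
  set Φμ := twirlAverage t μ (MonoidHom.id _) X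
  have hsum :
      HasSum (fun g => (w g : ℂ) • twirl t (G.subtype g : Matrix (Fin d) (Fin d) ℂ) X) Φμ :=
    Pi.hasSum.2 fun a => Pi.hasSum.2 fun b => by
      have := (summable_ofReal_mul_twirl_apply hw1.summable (↑) X a b).hasSum
      rwa [hdesign X a b] at this
  have key := hsum.twirlAverage ν (ρ := G.subtype) continuous_subtype_val
  have hΦμ : twirlAverage t ν G.subtype Φμ = Φμ :=
    twirlAverage_of_forall_twirl_eq ν G.subtype fun g =>
      twirl_twirlAverage μ (ρ := MonoidHom.id _) continuous_id (G.subtype g) X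
  simp only [twirlAverage_smul, twirlAverage_twirl, hΦμ] at key
  have hΦ := key.unique ((Complex.hasSum_ofReal.2 hw1).smul_const (twirlAverage t ν G.subtype X))
  rw [Complex.ofReal_one, one_smul] at hΦ
  exact congrFun (congrFun hΦ.symm x) y

/-- If a weighted ensemble supported on a closed subgroup `G` of `U(d)` forms a
weighted unitary `t`-design (its weighted twirl equals the Haar twirl over `U(d)`),
then `G` itself is an unweighted unitary `t`-design: the Haar twirl over `G`
(i.e. with respect to any left-invariant probability measure on `G`) equals the
Haar twirl over `U(d)`. -/
theorem stmt_1 (d t : ℕ)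
    [MeasurableSpace (Matrix.unitaryGroup (Fin d) ℂ)]
    [BorelSpace (Matrix.unitaryGroup (Fin d) ℂ)]
    (μ : Measure (Matrix.unitaryGroup (Fin d) ℂ)) [IsProbabilityMeasure μ]
    (hμ : ∀ V : Matrix.unitaryGroup (Fin d) ℂ,
      Measure.map (fun U => V * U) μ = μ)
    (G : Subgroup (Matrix.unitaryGroup (Fin d) ℂ))
    (hG : IsClosed (G : Set (Matrix.unitaryGroup (Fin d) ℂ)))
    (ν : Measure G) [IsProbabilityMeasure ν]
    (hν : ∀ h : G, Measure.map (fun g => h * g) ν = ν)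
    (w : G → ℝ) (hw : ∀ g, 0 ≤ w g) (hw1 : HasSum w 1)
    (hdesign : ∀ (X : Matrix (Fin t → Fin d) (Fin t → Fin d) ℂ)
      (x y : Fin t → Fin d),
      (∑' g : G, (w g : ℂ) *
        (twirl t (((g : Matrix.unitaryGroup (Fin d) ℂ) : Matrix (Fin d) (Fin d) ℂ)) X) x y)
        = ∫ U, (twirl t ((U : Matrix (Fin d) (Fin d) ℂ)) X) x y ∂μ) :
    ∀ (X : Matrix (Fin t → Fin d) (Fin t → Fin d) ℂ) (x y : Fin t → Fin d),
      (∫ g : G, (twirl t (((g : Matrix.unitaryGroup (Fin d) ℂ) : Matrix (Fin d) (Fin d) ℂ)) X) x y ∂ν)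
        = ∫ U, (twirl t ((U : Matrix (Fin d) (Fin d) ℂ)) X) x y ∂μ :=
  stmt_1_general d t μ hμ G ν hν w hw1 hdesign
end

section
/- Let p be an odd prime. The d^2 + d states consisting of the computational basis {|0⟩, ..., |d-1⟩} together with the states |θ,φ⟩ = (1/√d) Σ_{n=0}^{d-1} exp[(2πi/p)(θn + φn²)] |n⟩ for θ, φ ∈ {0, 1, ..., p-1}, with weights w_Fock = 1/(d(d+1)) on each basis state and w_Phase = d/(p²(d+1)) on each phase state, form a weighted state 2-design in dimension d for any d ≤ p. -/
/-!
The phase amplitudes multiply to `ψ a * conj (ψ c) * ψ b * conj (ψ e) = d⁻² ω^(θK + φL)` with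
`ω = exp (2πi/p)`, `K = a + b - c - e` and `L = a² + b² - c² - e²`, so orthogonality of the
characters of `ℤ/p` turns the phase sum into `p²/d²` times the indicator of `p ∣ K ∧ p ∣ L`.
In `𝔽_p` with `p` odd, equal sums and equal sums of squares force `{a, b} = {c, e}`, and since all
four indices are below `d ≤ p` this is an equality of indices. The basis states supply exactly the
overlap `a = b = c = e` of the two pairings, so inclusion–exclusion gives the symmetric projector.
-/

open Complex

/-- The phase states `|θ,φ⟩ = (1/√d) ∑_n exp[(2πi/p)(θn + φn²)] |n⟩`. -/
noncomputable def phaseState (p d θ φ : ℕ) : Fin d → ℂ :=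
  fun n => (1 / Real.sqrt d : ℝ) *
    Complex.exp (2 * Real.pi * Complex.I / p * ((θ : ℂ) * n + (φ : ℂ) * (n : ℂ) ^ 2))

theorem geom_sum_eq_ite_of_pow_eq_one {K : Type*} [Field K] [DecidableEq K] {ξ : K} {n : ℕ}
    (hξ : ξ ^ n = 1) :
    ∑ i ∈ Finset.range n, ξ ^ i = if ξ = 1 then (n : K) else 0 := by
  split_ifs with h
  · simp [h]
  · rw [geom_sum_eq h, hξ, sub_self, zero_div]

theorem sum_exp_two_pi_I_mul_eq_ite (n : ℕ) [NeZero n] (m : ℤ) :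
    ∑ k : Fin n, exp (2 * Real.pi * I / n * k * m) = if (n : ℤ) ∣ m then (n : ℂ) else 0 := by
  have hζ := Complex.isPrimitiveRoot_exp n (NeZero.ne n)
  have hterm (k : Fin n) :
      exp (2 * Real.pi * I / n * k * m) = (exp (2 * Real.pi * I / n) ^ m) ^ (k : ℕ) := by
    rw [← exp_int_mul, ← exp_nat_mul]
    ring_nf
  have hpow : (exp (2 * Real.pi * I / n) ^ m) ^ n = 1 := by
    rw [← zpow_natCast, ← zpow_mul, mul_comm m, zpow_mul, zpow_natCast, hζ.pow_eq_one, one_zpow]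
  simp_rw [hterm, Fin.sum_univ_eq_sum_range (fun k => (exp (2 * Real.pi * I / n) ^ m) ^ k),
    geom_sum_eq_ite_of_pow_eq_one hpow, hζ.zpow_eq_one_iff_dvd]

theorem eq_and_eq_or_eq_and_eq_of_add_eq_add_of_sq_add_sq_eq {R : Type*} [CommRing R]
    [IsDomain R] (h2 : (2 : R) ≠ 0) {x y z w : R} (hsum : x + y = z + w)
    (hsq : x ^ 2 + y ^ 2 = z ^ 2 + w ^ 2) :
    (x = z ∧ y = w) ∨ (x = w ∧ y = z) := by
  have h : 2 * ((x - z) * (x - w)) = 0 := by linear_combination hsq + (x - y - z - w) * hsum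
  rcases mul_eq_zero.mp ((mul_eq_zero.mp h).resolve_left h2) with hxz | hxw
  · have hxz := sub_eq_zero.mp hxz
    exact .inl ⟨hxz, by linear_combination hsum - hxz⟩
  · have hxw := sub_eq_zero.mp hxw
    exact .inr ⟨hxw, by linear_combination hsum - hxw⟩

theorem dvd_add_sub_and_dvd_sq_add_sub_iff {p d : ℕ} (hp : p.Prime) (hodd : Odd p) (hdp : d ≤ p)
    (a b c e : Fin d) :
    ((p : ℤ) ∣ a + b - c - e ∧ (p : ℤ) ∣ (a : ℤ) ^ 2 + b ^ 2 - c ^ 2 - e ^ 2) ↔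
      (a = c ∧ b = e) ∨ (a = e ∧ b = c) := by
  have := Fact.mk hp
  have hcast : Function.Injective fun x : Fin d => ((x : ℕ) : ZMod p) := fun x y hxy => by
    rw [ZMod.natCast_eq_natCast_iff', Nat.mod_eq_of_lt (x.2.trans_le hdp),
      Nat.mod_eq_of_lt (y.2.trans_le hdp)] at hxy
    exact Fin.ext hxy
  have h2 : (2 : ZMod p) ≠ 0 :=
    Ring.two_ne_zero <| by
      rw [ZMod.ringChar_zmod_n]
      rintro rfl
      exact Nat.not_odd_iff_even.mpr even_two hodd
  constructor
  · rintro ⟨hsum, hsq⟩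
    rw [← ZMod.intCast_zmod_eq_zero_iff_dvd] at hsum hsq
    push_cast at hsum hsq
    have hsum' : ((a : ℕ) : ZMod p) + b = c + e := by linear_combination hsum
    have hsq' : ((a : ℕ) : ZMod p) ^ 2 + (b : ℕ) ^ 2 = (c : ℕ) ^ 2 + (e : ℕ) ^ 2 := by
      linear_combination hsq
    simpa only [hcast.eq_iff] using
      eq_and_eq_or_eq_and_eq_of_add_eq_add_of_sq_add_sq_eq h2 hsum' hsq'
  · rintro (⟨rfl, rfl⟩ | ⟨rfl, rfl⟩) <;> constructor <;> ring_nf <;> exact dvd_zero _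

theorem conj_phaseState (p d θ φ : ℕ) (n : Fin d) :
    (starRingEnd ℂ) (phaseState p d θ φ n) = (1 / Real.sqrt d : ℝ) *
      exp (-(2 * Real.pi * I / p * ((θ : ℂ) * n + (φ : ℂ) * (n : ℂ) ^ 2))) := by
  simp only [phaseState, map_mul, ← exp_conj, map_div₀, map_add, map_pow, conj_ofReal,
    conj_natCast, conj_I, map_ofNat]
  ring_nf

theorem phaseState_mul_conj_mul_phaseState_mul_conj (p d θ φ : ℕ) (a b c e : Fin d) :
    phaseState p d θ φ a * (starRingEnd ℂ) (phaseState p d θ φ c) *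
        phaseState p d θ φ b * (starRingEnd ℂ) (phaseState p d θ φ e) =
      1 / (d : ℂ) ^ 2 * (exp (2 * Real.pi * I / p * θ * ((a + b - c - e : ℤ) : ℂ)) *
        exp (2 * Real.pi * I / p * φ * (((a : ℤ) ^ 2 + b ^ 2 - c ^ 2 - e ^ 2 : ℤ) : ℂ))) := by
  have hr : ((1 / Real.sqrt d : ℝ) : ℂ) ^ 4 = 1 / (d : ℂ) ^ 2 := by
    rw [← ofReal_pow, show 4 = 2 * 2 from rfl, pow_mul, div_pow, Real.sq_sqrt (Nat.cast_nonneg d)]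
    push_cast
    ring
  have hexp (r u v w x : ℂ) :
      r * exp u * (r * exp v) * (r * exp w) * (r * exp x) = r ^ 4 * exp (u + v + w + x) := by
    simp only [exp_add]
    ring
  rw [conj_phaseState, conj_phaseState]
  simp only [phaseState]
  rw [hexp, hr, ← exp_add]
  congr 2
  push_cast
  ring

theorem ite_and_add_ite_or {R : Type*} [AddMonoidWithOne R] (P Q : Prop) [Decidable P]
    [Decidable Q] :
    ((if P ∧ Q then 1 else 0) + (if P ∨ Q then 1 else 0) : R) =
      (if P then 1 else 0) + (if Q then 1 else 0) := by
  by_cases P <;> by_cases Q <;> simp_all [one_add_one_eq_two]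

theorem sum_ite_all_eq {d : ℕ} (a b c e : Fin d) :
    ∑ n : Fin d, (if a = n ∧ b = n ∧ c = n ∧ e = n then 1 else 0 : ℂ) =
      if (a = c ∧ b = e) ∧ (a = e ∧ b = c) then 1 else 0 := by
  rw [Finset.sum_eq_single a (fun n _ hn => if_neg fun h => hn h.1.symm) (by simp)]
  congr 1
  grind

theorem stmt_3_general (p d : ℕ) (hp : p.Prime) (hodd : Odd p) (hdp : d ≤ p) :
    ∀ a b c e : Fin d,
      (∑ n : Fin d, (1 / ((d : ℂ) * ((d : ℂ) + 1))) *
          (if a = n ∧ b = n ∧ c = n ∧ e = n then 1 else 0))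
        + ∑ θ : Fin p, ∑ φ : Fin p, ((d : ℂ) / ((p : ℂ) ^ 2 * ((d : ℂ) + 1))) *
            (phaseState p d θ φ a * (starRingEnd ℂ) (phaseState p d θ φ c) *
              phaseState p d θ φ b * (starRingEnd ℂ) (phaseState p d θ φ e))
      = (2 / ((d : ℂ) * ((d : ℂ) + 1))) *
          ((1 / 2) * ((if a = c ∧ b = e then 1 else 0) + (if a = e ∧ b = c then 1 else 0))) := by
  intro a b c e
  have := NeZero.mk hp.ne_zero
  have hp0 : (p : ℂ) ≠ 0 := by exact_mod_cast hp.ne_zero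
  have hphase : ∑ θ : Fin p, ∑ φ : Fin p, ((d : ℂ) / ((p : ℂ) ^ 2 * ((d : ℂ) + 1))) *
      (phaseState p d θ φ a * (starRingEnd ℂ) (phaseState p d θ φ c) *
        phaseState p d θ φ b * (starRingEnd ℂ) (phaseState p d θ φ e)) =
      1 / ((d : ℂ) * ((d : ℂ) + 1)) * if (a = c ∧ b = e) ∨ (a = e ∧ b = c) then 1 else 0 := by
    simp_rw [phaseState_mul_conj_mul_phaseState_mul_conj, ← Finset.mul_sum, ← Finset.sum_mul,
      sum_exp_two_pi_I_mul_eq_ite, ← dvd_add_sub_and_dvd_sq_add_sub_iff hp hodd hdp, ite_and]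
    split_ifs <;> field_simp <;> ring
  rw [← Finset.mul_sum, sum_ite_all_eq, hphase, ← mul_add, ite_and_add_ite_or]
  field_simp

/-- For an odd prime `p` and any `d ≤ p`, the computational basis states with
weight `1/(d(d+1))` each, together with the `p²` phase states with weight
`d/(p²(d+1))` each, form a weighted state 2-design in dimension `d`:
the weighted average of `(|ψ⟩⟨ψ|)^{⊗2}` equals `(2/(d(d+1))) Π_sym`, where
`Π_sym = (1/2)(I + SWAP)` (stated entrywise at `((a,b),(c,e))`). -/
theorem stmt_3 (p d : ℕ) (hp : p.Prime) (hodd : Odd p) (hd : 0 < d) (hdp : d ≤ p) :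
    ∀ a b c e : Fin d,
      (∑ n : Fin d, (1 / ((d : ℂ) * ((d : ℂ) + 1))) *
          (if a = n ∧ b = n ∧ c = n ∧ e = n then 1 else 0))
        + ∑ θ : Fin p, ∑ φ : Fin p, ((d : ℂ) / ((p : ℂ) ^ 2 * ((d : ℂ) + 1))) *
            (phaseState p d θ φ a * (starRingEnd ℂ) (phaseState p d θ φ c) *
              phaseState p d θ φ b * (starRingEnd ℂ) (phaseState p d θ φ e))
      = (2 / ((d : ℂ) * ((d : ℂ) + 1))) *
          ((1 / 2) * ((if a = c ∧ b = e then 1 else 0) + (if a = e ∧ b = c then 1 else 0))) :=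
  stmt_3_general p d hp hodd hdp
end

section
/- The integral identity: for real t > -1/2, (2^t/π) ∫_0^{2π} (1+cos Δ)^t (1-cos Δ)(1 - Δ/(2π)) dΔ = Γ(2t+1)/(Γ(t+1)Γ(t+2)). -/
/-! The unweighted integrand `g Δ = (1 + cos Δ)^t (1 - cos Δ)` is invariant under `Δ ↦ 2π - Δ`,
so the weight `1 - Δ/(2π)` may be replaced by its average `1/2`, and the integral of `g` over
`[0, 2π]` is twice that over `[0, π]`. There the substitution `x = (1 + cos Δ)/2` turns
`∫ (1 + cos Δ)^p (1 - cos Δ)^q dΔ` into `2^(p+q) B(p + 1/2, q + 1/2)`; for `p = t`, `q = 1` the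
Legendre duplication formula simplifies `B(t + 1/2, 3/2)` to the stated ratio of Gamma values. -/

open Real MeasureTheory Set intervalIntegral

lemma ofReal_rpow_mul_one_sub_rpow {x : ℝ} (hx : x ∈ Icc (0 : ℝ) 1) (a b : ℝ) :
    ((x ^ (a - 1) * (1 - x) ^ (b - 1) : ℝ) : ℂ) =
      (x : ℂ) ^ ((a : ℂ) - 1) * (1 - (x : ℂ)) ^ ((b : ℂ) - 1) := by
  rw [Complex.ofReal_mul, Complex.ofReal_cpow hx.1, Complex.ofReal_cpow (sub_nonneg.2 hx.2)]
  push_cast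
  rfl

lemma intervalIntegrable_rpow_mul_one_sub_rpow {a b : ℝ} (ha : 0 < a) (hb : 0 < b) :
    IntervalIntegrable (fun x : ℝ ↦ x ^ (a - 1) * (1 - x) ^ (b - 1)) volume 0 1 := by
  refine (Complex.betaIntegral_convergent (u := a) (v := b) (by simpa) (by simpa)).mono_fun
    (by fun_prop) ((ae_restrict_mem measurableSet_uIoc).mono fun x hx ↦ ?_)
  rw [uIoc_of_le zero_le_one] at hx
  dsimp only
  rw [← ofReal_rpow_mul_one_sub_rpow (Ioc_subset_Icc_self hx), Complex.norm_real]

lemma integral_rpow_mul_one_sub_rpow {a b : ℝ} (ha : 0 < a) (hb : 0 < b) :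
    ∫ x in (0 : ℝ)..1, x ^ (a - 1) * (1 - x) ^ (b - 1) = Gamma a * Gamma b / Gamma (a + b) := by
  have h := Complex.betaIntegral_eq_Gamma_mul_div a b (by simpa) (by simpa)
  rw [Complex.betaIntegral, ← integral_congr fun x hx ↦ ofReal_rpow_mul_one_sub_rpow
    (by rwa [uIcc_of_le zero_le_one] at hx) a b, integral_ofReal,
    ← Complex.ofReal_add, Complex.Gamma_ofReal, Complex.Gamma_ofReal, Complex.Gamma_ofReal] at h
  exact_mod_cast h

lemma one_add_cos_rpow_mul_one_sub_cos_rpow_eq (p q : ℝ) {Δ : ℝ} (hΔ : Δ ∈ Ioo 0 π) :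
    (1 + cos Δ) ^ p * (1 - cos Δ) ^ q =
      2 ^ (p + q) * (((1 + cos Δ) / 2) ^ (p - 1 / 2) * (1 - (1 + cos Δ) / 2) ^ (q - 1 / 2)) *
        (sin Δ / 2) := by
  set x := (1 + cos Δ) / 2 with hx
  have hcos : cos Δ ∈ Ioo (-1) 1 := by
    constructor
    · have := cos_lt_cos_of_nonneg_of_le_pi hΔ.1.le le_rfl hΔ.2
      simpa using this
    · have := cos_lt_cos_of_nonneg_of_le_pi le_rfl hΔ.2.le hΔ.1
      simpa using this
  have hx0 : 0 < x := by rw [hx]; linarith [hcos.1]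
  have hx1 : 0 < 1 - x := by rw [hx]; linarith [hcos.2]
  have hsin : sin Δ / 2 = x ^ (1 / 2 : ℝ) * (1 - x) ^ (1 / 2 : ℝ) := by
    rw [← mul_rpow hx0.le hx1.le, ← sqrt_eq_rpow, eq_comm, sqrt_eq_iff_mul_self_eq_of_pos
      (by linarith [sin_pos_of_pos_of_lt_pi hΔ.1 hΔ.2]), hx]
    nlinarith [sin_sq_add_cos_sq Δ]
  have h1 : 1 + cos Δ = 2 * x := by rw [hx]; ring
  have h2 : 1 - cos Δ = 2 * (1 - x) := by rw [hx]; ring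
  rw [hsin, h1, h2, mul_rpow zero_le_two hx0.le, mul_rpow zero_le_two hx1.le,
    rpow_add two_pos]
  have e1 : x ^ p = x ^ (p - 1 / 2) * x ^ (1 / 2 : ℝ) := by
    rw [← rpow_add hx0]; norm_num
  have e2 : (1 - x) ^ q = (1 - x) ^ (q - 1 / 2) * (1 - x) ^ (1 / 2 : ℝ) := by
    rw [← rpow_add hx1]; norm_num
  rw [e1, e2]
  ring

lemma eqOn_one_add_cos_rpow_mul_one_sub_cos_rpow (p q : ℝ) :
    EqOn (fun Δ ↦ (1 + cos Δ) ^ p * (1 - cos Δ) ^ q)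
      (fun Δ ↦ -2 ^ (p + q) * (((fun x ↦ x ^ (p + 1 / 2 - 1) * (1 - x) ^ (q + 1 / 2 - 1)) ∘
        fun Δ ↦ (1 + cos Δ) / 2) Δ * -(sin Δ / 2))) (Ioo 0 π) := fun Δ hΔ ↦ by
  simp only [Function.comp_apply, one_add_cos_rpow_mul_one_sub_cos_rpow_eq p q hΔ]
  ring_nf

lemma hasDerivAt_one_add_cos_div_two (Δ : ℝ) :
    HasDerivAt (fun Δ ↦ (1 + cos Δ) / 2) (-(sin Δ / 2)) Δ := by
  simpa [neg_div] using ((hasDerivAt_cos Δ).const_add 1).div_const 2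

lemma intervalIntegrable_one_add_cos_rpow_mul_one_sub_cos_rpow {p q : ℝ}
    (hp : -(1 / 2) < p) (hq : -(1 / 2) < q) :
    IntervalIntegrable (fun Δ ↦ (1 + cos Δ) ^ p * (1 - cos Δ) ^ q) volume 0 π := by
  have hsubst := (integrable_comp_mul_deriv_iff_of_deriv_nonpos (a := 0) (b := π)
    (g := fun x ↦ x ^ (p + 1 / 2 - 1) * (1 - x) ^ (q + 1 / 2 - 1)) (by fun_prop)
    (fun Δ _ ↦ hasDerivAt_one_add_cos_div_two Δ) (fun Δ hΔ ↦ ?_)).2 ?_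
  · rw [intervalIntegrable_iff_integrableOn_Ioo_of_le pi_pos.le] at hsubst ⊢
    exact IntegrableOn.congr_fun (hsubst.const_mul _)
      (eqOn_one_add_cos_rpow_mul_one_sub_cos_rpow p q).symm measurableSet_Ioo
  · simp only [min_eq_left pi_pos.le, max_eq_right pi_pos.le] at hΔ
    linarith [sin_pos_of_pos_of_lt_pi hΔ.1 hΔ.2]
  · norm_num
    exact (intervalIntegrable_rpow_mul_one_sub_rpow (by linarith) (by linarith)).symm

lemma integral_one_add_cos_rpow_mul_one_sub_cos_rpow {p q : ℝ}
    (hp : -(1 / 2) < p) (hq : -(1 / 2) < q) :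
    ∫ Δ in (0 : ℝ)..π, (1 + cos Δ) ^ p * (1 - cos Δ) ^ q =
      2 ^ (p + q) * (Gamma (p + 1 / 2) * Gamma (q + 1 / 2) / Gamma (p + q + 1)) := by
  rw [integral_congr_Ioo_of_le pi_pos.le (eqOn_one_add_cos_rpow_mul_one_sub_cos_rpow p q),
    intervalIntegral.integral_const_mul, integral_comp_mul_deriv_of_deriv_nonpos (by fun_prop)
      (fun Δ _ ↦ hasDerivAt_one_add_cos_div_two Δ) ?_]
  · norm_num
    rw [integral_symm, integral_rpow_mul_one_sub_rpow (by linarith) (by linarith)]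
    ring_nf
  · intro Δ hΔ
    simp only [min_eq_left pi_pos.le, max_eq_right pi_pos.le] at hΔ
    linarith [sin_pos_of_pos_of_lt_pi hΔ.1 hΔ.2]

lemma IntervalIntegrable.reflect_two_mul {f : ℝ → ℝ} {a : ℝ}
    (hf : IntervalIntegrable f volume 0 a) (hrefl : ∀ x, f (2 * a - x) = f x) :
    IntervalIntegrable f volume a (2 * a) := by
  have h := hf.comp_sub_left (2 * a)
  simp only [hrefl, sub_zero, show 2 * a - a = a by ring] at h
  exact h.symm

lemma integral_zero_two_mul_of_reflect {f : ℝ → ℝ} {a : ℝ}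
    (hf : IntervalIntegrable f volume 0 a) (hrefl : ∀ x, f (2 * a - x) = f x) : ∫ x in 0..2 * a, f x = 2 * ∫ x in 0..a, f x := by
  have h := integral_comp_sub_left (a := 0) (b := a) f (2 * a)
  simp only [hrefl, sub_zero, show 2 * a - a = a by ring] at h
  rw [← integral_add_adjacent_intervals hf (hf.reflect_two_mul hrefl), ← h]
  ring

lemma integral_mul_one_sub_div_of_reflect {f : ℝ → ℝ} {L : ℝ} (hL : L ≠ 0)
    (hf : IntervalIntegrable f volume 0 L) (hrefl : ∀ x, f (L - x) = f x) :
    ∫ x in 0..L, f x * (1 - x / L) = (∫ x in 0..L, f x) / 2 := by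
  have hswap := integral_comp_sub_left (a := 0) (b := L) (fun x ↦ f x * (x / L)) L
  simp only [hrefl, sub_self, sub_zero, sub_div, div_self hL] at hswap
  have hsum := integral_add (hf.mul_continuousOn (g := fun x ↦ 1 - x / L) (by fun_prop))
    (hf.mul_continuousOn (g := fun x ↦ x / L) (by fun_prop))
  simp only [← mul_add, sub_add_cancel, mul_one] at hsum
  linarith

lemma Gamma_add_half_mul_Gamma_three_div_two_div {t : ℝ} (ht : -1 < t) :
    Gamma (t + 1 / 2) * Gamma (3 / 2) / Gamma (t + 2) =
      π * Gamma (2 * t + 1) / (2 ^ (2 * t + 1) * (Gamma (t + 1) * Gamma (t + 2))) := by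
  have hdup := Gamma_mul_Gamma_add_half (t + 1 / 2)
  rw [show t + 1 / 2 + 1 / 2 = t + 1 by ring, show 2 * (t + 1 / 2) = 2 * t + 1 by ring,
    show 1 - (2 * t + 1) = -(2 * t) by ring, rpow_neg zero_le_two] at hdup
  have hΓ32 : Gamma (3 / 2) = √π / 2 := by
    rw [show (3 : ℝ) / 2 = 1 / 2 + 1 by norm_num, Gamma_add_one (by norm_num), Gamma_one_half_eq]
    ring
  have hG1 := (Gamma_pos_of_pos (by linarith : 0 < t + 1)).ne'
  have hG2 := (Gamma_pos_of_pos (by linarith : 0 < t + 2)).ne'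
  rw [hΓ32, rpow_add two_pos, rpow_one, div_eq_div_iff (by positivity) (by positivity)]
  field_simp at hdup ⊢
  linear_combination √π * hdup + Gamma (t * 2 + 1) * mul_self_sqrt pi_pos.le

/-- The integral identity: for real `t > -1/2`,
`(2^t/π) ∫_0^{2π} (1+cos Δ)^t (1-cos Δ)(1 - Δ/(2π)) dΔ = Γ(2t+1)/(Γ(t+1)Γ(t+2))`. -/
theorem stmt_9 (t : ℝ) (ht : -(1 / 2) < t) :
    (2 ^ t / Real.pi) *
        ∫ Δ in (0:ℝ)..(2 * Real.pi),
          (1 + Real.cos Δ) ^ t * (1 - Real.cos Δ) * (1 - Δ / (2 * Real.pi))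
      = Real.Gamma (2 * t + 1) / (Real.Gamma (t + 1) * Real.Gamma (t + 2)) := by
  set g : ℝ → ℝ := fun Δ ↦ (1 + cos Δ) ^ t * (1 - cos Δ)
  have hrefl (Δ : ℝ) : g (2 * π - Δ) = g Δ := by simp only [g, cos_two_pi_sub]
  have hg : IntervalIntegrable g volume 0 π := by
    simpa [g] using
      intervalIntegrable_one_add_cos_rpow_mul_one_sub_cos_rpow ht (q := 1) (by norm_num)
  have hg_val : ∫ Δ in (0 : ℝ)..π, g Δ =
      2 ^ (t + 1) * (Gamma (t + 1 / 2) * Gamma (3 / 2) / Gamma (t + 2)) := by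
    have h := integral_one_add_cos_rpow_mul_one_sub_cos_rpow ht (q := 1) (by norm_num)
    rw [show (1 : ℝ) + 1 / 2 = 3 / 2 by norm_num, show t + 1 + 1 = t + 2 by ring] at h
    simpa [g] using h
  calc _ = 2 ^ t / π * ((∫ Δ in (0 : ℝ)..2 * π, g Δ) / 2) :=
        congrArg _ (integral_mul_one_sub_div_of_reflect (by positivity)
          (hg.trans (hg.reflect_two_mul hrefl)) hrefl)
    _ = 2 ^ t / π * ∫ Δ in (0 : ℝ)..π, g Δ := by
        rw [integral_zero_two_mul_of_reflect hg hrefl]; ring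
    _ = _ := by
        rw [hg_val, Gamma_add_half_mul_Gamma_three_div_two_div (by linarith),
          rpow_add two_pos, rpow_add two_pos, rpow_one, two_mul, rpow_add two_pos]
        field_simp
end

section
/- The multiplication action of SL₂(Z_d) on Z_d² is transitive on each set V_r = {(a,b) ∈ Z_d² : gcd(a,b,d) = r}, for each divisor r of d: for any (a,b) with gcd(a,b,d) = r, there is M ∈ SL₂(Z_d) with M·(r,0)ᵀ = (a,b)ᵀ. -/
/-!
Write `(a, b) = g • (x, y)` with `g = gcd(a, b)` and `x, y` coprime, so that `(x, y)` is the first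
column of a matrix in `SL₂`. Since `g / r` is coprime to `d / r`, it lifts to a unit `u` of `ℤ_d`
with `g = u r`, and the factor `u` is absorbed by the diagonal matrix `diag(u, u⁻¹)`.
-/

open Matrix MatrixGroups

theorem ZMod.exists_unit_mul_gcd (n d : ℕ) [NeZero d] :
    ∃ u : (ZMod d)ˣ, (n : ZMod d) = u * (n.gcd d : ℕ) := by
  set r := n.gcd d
  have hr : 0 < r := Nat.gcd_pos_of_pos_right n (NeZero.pos d)
  have hdvd : d / r ∣ d := Nat.div_dvd_of_dvd (Nat.gcd_dvd_right n d)
  obtain ⟨u, hu⟩ := ZMod.unitsMap_surjective hdvd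
    (ZMod.unitOfCoprime (n / r) (Nat.coprime_div_gcd_div_gcd hr))
  have hmod : (u : ZMod d).val ≡ n / r [MOD d / r] := by
    rw [← ZMod.natCast_eq_natCast_iff, ZMod.natCast_val, ← ZMod.unitsMap_val hdvd, hu]
    rfl
  have hmod' := hmod.mul_right' r
  rw [Nat.div_mul_cancel (Nat.gcd_dvd_right n d), Nat.div_mul_cancel (Nat.gcd_dvd_left n d),
    ← ZMod.natCast_eq_natCast_iff, Nat.cast_mul, ZMod.natCast_zmod_val] at hmod'
  exact ⟨u, hmod'.symm⟩

theorem IsCoprime.exists_SL2_mulVec {R : Type*} [CommRing R] {x y : R} (hxy : IsCoprime x y)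
    (u : Rˣ) (c : R) :
    ∃ M : SL(2, R), (M : Matrix (Fin 2) (Fin 2) R) *ᵥ ![c, 0] = ![u * c * x, u * c * y] := by
  obtain ⟨v, w, h⟩ := hxy
  refine ⟨⟨!![u * x, -(↑u⁻¹ * w); u * y, ↑u⁻¹ * v], ?_⟩, ?_⟩
  · rw [Matrix.det_fin_two_of, ← h]
    linear_combination (v * x + w * y) * u.mul_inv
  · ext i
    fin_cases i <;> simp <;> ring

theorem stmt_16_general (d : ℕ) (hd : 0 < d) (r : ℕ) (a b : ZMod d)
    (h : Nat.gcd (Nat.gcd a.val b.val) d = r) :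
    ∃ M : Matrix.SpecialLinearGroup (Fin 2) (ZMod d),
      (M : Matrix (Fin 2) (Fin 2) (ZMod d)).mulVec ![(r : ZMod d), 0] = ![a, b] := by
  have : NeZero d := ⟨hd.ne'⟩
  subst h
  obtain ⟨x, y, hxy, ha, hb⟩ := Nat.exists_coprime a.val b.val
  generalize a.val.gcd b.val = g at *
  obtain ⟨u, hu⟩ := ZMod.exists_unit_mul_gcd g d
  obtain ⟨M, hM⟩ := hxy.cast.exists_SL2_mulVec u (g.gcd d : ℕ)
  refine ⟨M, hM.trans ?_⟩
  rw [← ZMod.natCast_zmod_val a, ← ZMod.natCast_zmod_val b, ha, hb]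
  simp only [Nat.cast_mul, hu, mul_comm]

/-- The multiplication action of `SL₂(ℤ_d)` on `ℤ_d²` is transitive on each set
`V_r = {(a,b) : gcd(a,b,d) = r}` for `r ∣ d`: any `(a,b)` with `gcd(a,b,d) = r`
is the image of `(r,0)ᵀ` under some `M ∈ SL₂(ℤ_d)`. -/
theorem stmt_16 (d : ℕ) (hd : 0 < d) (r : ℕ) (hr : r ∣ d) (a b : ZMod d)
    (h : Nat.gcd (Nat.gcd a.val b.val) d = r) :
    ∃ M : Matrix.SpecialLinearGroup (Fin 2) (ZMod d),
      (M : Matrix (Fin 2) (Fin 2) (ZMod d)).mulVec ![(r : ZMod d), 0] = ![a, b] :=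
  stmt_16_general d hd r a b h
end
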